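/- For every integer n ≥ 1, the polynomials Q_n satisfy the recurrence Q_{n+1}(x) = ((2n+1)x/(n+1)^2 + (8n^2+8n+3)/(2(n+1)^2)) · Q_n(x) − ((4n−1)(4n+1)/(4(n+1)^2)) · Q_{n−1}(x) + (x/(n+1)^2) · Q_n'(x). -/

import Mathlib

/-!
Write `P_n(x) = T_n(x + 1)`; the coefficient of `y^j` in `T_n` is the hypergeometric weight
`2^j C(2m, m) C(2j + m, j) / 4^n` with `m = n - j`. Since neighbouring weights have rational
ratios, comparing coefficients yields a recurrence for `T_n`, which the shift `y = x + 1` turns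
into `4(n+1)² P_{n+1} = 4(2n+1) x(xP_n)' + (16n² + 16n + 6) P_n + 4x P_n' − (16n² − 1) P_{n−1}`.
The Borel transform `∑ aᵢ xⁱ ↦ ∑ aᵢ xⁱ / i!` maps `P_n` to `Q_n`, sends `x(xp)'` to `x` times
the transform of `p` and commutes with `x d/dx`, so it carries this recurrence to that of `Q_n`.
-/

open Polynomial

/-- The Boros-Moll polynomial `P_n(x)`. -/
noncomputable def borosMoll (n : ℕ) : Polynomial ℝ :=
  ((2 : ℝ) ^ (2 * n))⁻¹ • ∑ j ∈ Finset.range (n + 1),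
    Polynomial.C ((2 : ℝ) ^ j * (Nat.choose (2 * n - 2 * j) (n - j) : ℝ) *
      (Nat.choose (n + j) j : ℝ)) * (Polynomial.X + 1) ^ j

/-- The coefficients `d_i(n)`, with the convention `d_i(n) = 0` for `i < 0` or `i > n`. -/
noncomputable def bmCoeff (i : ℤ) (n : ℕ) : ℝ :=
  if 0 ≤ i then (borosMoll n).coeff i.toNat else 0

/-- The polynomial `Q_n(x) = ∑ d_i(n)/i! x^i`. -/
noncomputable def Q (n : ℕ) : Polynomial ℝ :=
  ∑ i ∈ Finset.range (n + 1),
    Polynomial.C ((borosMoll n).coeff i / (Nat.factorial i : ℝ)) * Polynomial.X ^ i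

/-- The polynomial `R_n(x) = ∑ d_i(n)/(i+2)! x^i`. -/
noncomputable def R (n : ℕ) : Polynomial ℝ :=
  ∑ i ∈ Finset.range (n + 1),
    Polynomial.C ((borosMoll n).coeff i / (Nat.factorial (i + 2) : ℝ)) * Polynomial.X ^ i

/-- A real polynomial has only real zeros: every complex root is real. -/
def RealRooted (p : Polynomial ℝ) : Prop :=
  ∀ z : ℂ, Polynomial.aeval z p = 0 → z.im = 0

/-- `g` strictly interlaces `f`: `deg f = deg g + 1`, the zeros
`r_1 ≥ ⋯ ≥ r_{m+1}` of `f` and `s_1 ≥ ⋯ ≥ s_m` of `g` satisfy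
`r_{i+1} ≤ s_i ≤ r_i`, and `f, g` have no common zeros. -/
def StrictlyInterlaces (g f : Polynomial ℝ) : Prop :=
  f.natDegree = g.natDegree + 1 ∧
  ∃ (s : Fin g.natDegree → ℝ) (r : Fin (g.natDegree + 1) → ℝ),
    Antitone s ∧ Antitone r ∧
    g.roots = Multiset.map s Finset.univ.val ∧
    f.roots = Multiset.map r Finset.univ.val ∧
    (∀ i : Fin g.natDegree, r i.succ ≤ s i ∧ s i ≤ r i.castSucc) ∧
    ∀ x : ℝ, ¬ (g.IsRoot x ∧ f.IsRoot x)

open scoped Nat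

theorem Polynomial.coeff_X_mul_derivative {R : Type*} [Semiring R] (p : R[X]) (n : ℕ) :
    (X * derivative p).coeff n = n * p.coeff n := by
  cases n with
  | zero => simp
  | succ n => rw [coeff_X_mul, coeff_derivative, Nat.cast_comm, Nat.cast_succ]

theorem Polynomial.coeff_X_mul_derivative_X_mul {R : Type*} [Semiring R] (p : R[X]) (n : ℕ) :
    (X * derivative (X * p)).coeff n = n * p.coeff (n - 1) := by
  rw [coeff_X_mul_derivative]
  cases n with
  | zero => simp
  | succ n => rw [coeff_X_mul, Nat.add_sub_cancel]

theorem Polynomial.derivative_taylor {R : Type*} [CommSemiring R] (r : R) (p : R[X]) :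
    derivative (taylor r p) = taylor r (derivative p) := by
  simp [taylor_apply, derivative_comp]

section BorelTransform

variable {K : Type*} [Field K]

noncomputable def borelTransform : K[X] →ₗ[K] K[X] :=
  lsum fun i => (i ! : K)⁻¹ • monomial i

theorem coeff_borelTransform (p : K[X]) (n : ℕ) :
    (borelTransform p).coeff n = p.coeff n / n ! := by
  rw [borelTransform, lsum_apply, Polynomial.sum, finsetSum_coeff]
  simp only [LinearMap.smul_apply, coeff_smul, coeff_monomial, smul_eq_mul, mul_ite, mul_zero]
  rw [Finset.sum_ite_eq']
  split_ifs with h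
  · rw [div_eq_inv_mul]
  · rw [notMem_support_iff.mp h, zero_div]

theorem borelTransform_C_mul (a : K) (p : K[X]) :
    borelTransform (C a * p) = C a * borelTransform p := by
  simp only [C_mul', map_smul]

theorem borelTransform_X_mul_derivative (p : K[X]) :
    borelTransform (X * derivative p) = X * derivative (borelTransform p) := by
  ext n
  simp only [coeff_borelTransform, coeff_X_mul_derivative]
  ring

theorem borelTransform_X_mul_derivative_X_mul [CharZero K] (p : K[X]) :
    borelTransform (X * derivative (X * p)) = X * borelTransform p := by
  ext n
  rw [coeff_borelTransform, coeff_X_mul_derivative_X_mul]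
  cases n with
  | zero => simp
  | succ n =>
    rw [coeff_X_mul, coeff_borelTransform, Nat.add_sub_cancel, Nat.factorial_succ]
    push_cast
    field_simp

end BorelTransform

noncomputable def borosMollWeight (j m : ℕ) : ℝ :=
  2 ^ j * m.centralBinom * (2 * j + m).choose j / 4 ^ (j + m)

theorem cast_choose_two_mul_add_succ (j m : ℕ) :
    ((2 * j + m + 1).choose j : ℝ) = (2 * j + m + 1) / (j + m + 1) * (2 * j + m).choose j := by
  have h := Nat.choose_mul_succ_eq (2 * j + m) j
  rw [show 2 * j + m + 1 - j = j + m + 1 by omega] at h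
  rw [div_mul_eq_mul_div, eq_div_iff (by positivity)]
  exact_mod_cast h.symm.trans (mul_comm _ _)

theorem borosMollWeight_succ_right (j m : ℕ) :
    borosMollWeight j (m + 1) =
      (2 * m + 1) * (2 * j + m + 1) / (2 * (m + 1) * (j + m + 1)) * borosMollWeight j m := by
  have hc : ((m + 1).centralBinom : ℝ) = 2 * (2 * m + 1) / (m + 1) * m.centralBinom := by
    rw [div_mul_eq_mul_div, eq_div_iff (by positivity)]
    exact_mod_cast (mul_comm _ _).trans (Nat.succ_mul_centralBinom_succ m)
  rw [borosMollWeight, borosMollWeight, show 2 * j + (m + 1) = 2 * j + m + 1 by ring, hc,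
    cast_choose_two_mul_add_succ]
  field_simp
  ring

theorem borosMollWeight_succ_left (j m : ℕ) :
    borosMollWeight (j + 1) m =
      (2 * j + m + 1) * (2 * j + m + 2) / (2 * (j + 1) * (j + m + 1)) * borosMollWeight j m := by
  have hb : ((2 * j + m + 2).choose (j + 1) : ℝ) =
      (2 * j + m + 2) / (j + 1) * (2 * j + m + 1).choose j := by
    rw [div_mul_eq_mul_div, eq_div_iff (by positivity)]
    exact_mod_cast (Nat.add_one_mul_choose_eq (2 * j + m + 1) j).symm
  rw [borosMollWeight, borosMollWeight, show 2 * (j + 1) + m = 2 * j + m + 2 by ring, hb,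
    cast_choose_two_mul_add_succ]
  field_simp
  ring

theorem borosMollWeight_recurrence (j k : ℕ) :
    4 * (j + k + 2 : ℝ) ^ 2 * borosMollWeight j (k + 2) =
      4 * (2 * (j + k + 1 : ℝ) + 1) * j * borosMollWeight (j - 1) (k + 2) +
        (16 * (j + k + 1 : ℝ) ^ 2 + 8 * (j + k + 1) + 2 - (16 * (j + k + 1) + 4) * j) *
          borosMollWeight j (k + 1) +
        8 * (j + k + 1 : ℝ) * (j + 1) * borosMollWeight (j + 1) k -
        (16 * (j + k + 1 : ℝ) ^ 2 - 1) * borosMollWeight j k := by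
  rcases j with _ | i <;>
  · simp only [Nat.add_sub_cancel, borosMollWeight_succ_left, borosMollWeight_succ_right]
    push_cast
    field_simp
    ring

noncomputable def shiftedBorosMoll (n : ℕ) : ℝ[X] :=
  ∑ j ∈ Finset.range (n + 1), C (borosMollWeight j (n - j)) * X ^ j

theorem coeff_shiftedBorosMoll (n j : ℕ) :
    (shiftedBorosMoll n).coeff j = if j ≤ n then borosMollWeight j (n - j) else 0 := by
  simp only [shiftedBorosMoll, finsetSum_coeff, coeff_C_mul_X_pow, Finset.sum_ite_eq,
    Finset.mem_range, Nat.lt_succ_iff]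

theorem coeff_shiftedBorosMoll_recurrence (n j : ℕ) :
    4 * (n + 2 : ℝ) ^ 2 * (shiftedBorosMoll (n + 2)).coeff j =
      4 * (2 * (n + 1 : ℝ) + 1) * j * (shiftedBorosMoll (n + 1)).coeff (j - 1) +
        (16 * (n + 1 : ℝ) ^ 2 + 8 * (n + 1) + 2 - (16 * (n + 1) + 4) * j) *
          (shiftedBorosMoll (n + 1)).coeff j +
        8 * (n + 1 : ℝ) * (j + 1) * (shiftedBorosMoll (n + 1)).coeff (j + 1) -
        (16 * (n + 1 : ℝ) ^ 2 - 1) * (shiftedBorosMoll n).coeff j := by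
  rcases le_or_gt j n with h | h
  · obtain ⟨k, rfl⟩ := Nat.exists_eq_add_of_le h
    have hpred : (j : ℝ) * (shiftedBorosMoll (j + k + 1)).coeff (j - 1) =
        j * borosMollWeight (j - 1) (k + 2) := by
      rcases j with _ | i
      · rw [Nat.cast_zero, zero_mul, zero_mul]
      · rw [coeff_shiftedBorosMoll, if_pos (by omega),
          show i + 1 + k + 1 - (i + 1 - 1) = k + 2 by omega]
    rw [mul_assoc _ (j : ℝ), hpred]
    simp (disch := omega) only [coeff_shiftedBorosMoll, if_pos,
      show j + k + 2 - j = k + 2 by omega, show j + k + 1 - j = k + 1 by omega,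
      show j + k + 1 - (j + 1) = k by omega, Nat.add_sub_cancel_left]
    push_cast
    linear_combination borosMollWeight_recurrence j k
  · obtain rfl | rfl | h' : j = n + 1 ∨ j = n + 2 ∨ n + 2 < j := by omega
    · simp (disch := omega) only [coeff_shiftedBorosMoll, if_pos, if_neg, Nat.add_sub_add_left,
        Nat.add_sub_cancel, Nat.add_sub_cancel_left, Nat.sub_self]
      simp only [borosMollWeight_succ_left, borosMollWeight_succ_right]
      push_cast
      field_simp
      ring
    · simp (disch := omega) only [coeff_shiftedBorosMoll, if_pos, if_neg,
        show n + 1 - (n + 2 - 1) = 0 by omega, Nat.sub_self]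
      rw [borosMollWeight_succ_left (n + 1) 0]
      push_cast
      field_simp
      ring
    · simp (disch := omega) only [coeff_shiftedBorosMoll, if_neg]
      ring

theorem shiftedBorosMoll_recurrence (n : ℕ) :
    C (4 * (n + 2 : ℝ) ^ 2) * shiftedBorosMoll (n + 2) =
      C (4 * (2 * (n + 1 : ℝ) + 1)) * (X * derivative (X * shiftedBorosMoll (n + 1))) +
        C (16 * (n + 1 : ℝ) ^ 2 + 8 * (n + 1) + 2) * shiftedBorosMoll (n + 1) -
        C (16 * (n + 1 : ℝ) + 4) * (X * derivative (shiftedBorosMoll (n + 1))) +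
        C (8 * (n + 1 : ℝ)) * derivative (shiftedBorosMoll (n + 1)) -
        C (16 * (n + 1 : ℝ) ^ 2 - 1) * shiftedBorosMoll n := by
  ext j
  simp only [coeff_add, coeff_sub, coeff_C_mul]
  rw [coeff_X_mul_derivative_X_mul, coeff_X_mul_derivative, coeff_derivative]
  linear_combination coeff_shiftedBorosMoll_recurrence n j

theorem borosMoll_eq_taylor_shiftedBorosMoll (n : ℕ) :
    borosMoll n = taylor 1 (shiftedBorosMoll n) := by
  simp only [borosMoll, shiftedBorosMoll, map_sum, taylor_mul, taylor_C, taylor_X_pow, C_1,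
    Finset.smul_sum, smul_eq_C_mul, ← mul_assoc, ← C_mul]
  refine Finset.sum_congr rfl fun j hj => ?_
  obtain ⟨m, rfl⟩ := Nat.exists_eq_add_of_le (Finset.mem_range_succ_iff.mp hj)
  rw [borosMollWeight, Nat.centralBinom_eq_two_mul_choose, pow_mul]
  simp only [Nat.add_sub_cancel_left, show 2 * (j + m) - 2 * j = 2 * m by omega,
    show j + m + j = 2 * j + m by omega]
  norm_num [div_eq_inv_mul, mul_assoc]

theorem natDegree_shiftedBorosMoll_le (n : ℕ) : (shiftedBorosMoll n).natDegree ≤ n :=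
  natDegree_le_iff_coeff_eq_zero.mpr fun j hj => by
    rw [coeff_shiftedBorosMoll, if_neg (by exact_mod_cast hj.not_ge)]

theorem borosMoll_recurrence (n : ℕ) :
    C (4 * (n + 2 : ℝ) ^ 2) * borosMoll (n + 2) =
      C (4 * (2 * (n + 1 : ℝ) + 1)) * (X * derivative (X * borosMoll (n + 1))) +
        C (16 * (n + 1 : ℝ) ^ 2 + 16 * (n + 1) + 6) * borosMoll (n + 1) +
        C 4 * (X * derivative (borosMoll (n + 1))) -
        C (16 * (n + 1 : ℝ) ^ 2 - 1) * borosMoll n := by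
  have h := congrArg (taylor 1) (shiftedBorosMoll_recurrence n)
  simp only [map_add, map_sub, taylor_mul, taylor_C, taylor_X, ← derivative_taylor,
    ← borosMoll_eq_taylor_shiftedBorosMoll] at h
  simp only [derivative_mul, derivative_add, derivative_X, derivative_C] at h ⊢
  simp only [map_add, map_sub, map_mul, map_pow, map_natCast, map_ofNat, map_one] at h ⊢
  linear_combination h

theorem Q_eq_borelTransform (n : ℕ) : Q n = borelTransform (borosMoll n) := by
  ext i
  simp only [Q, finsetSum_coeff, coeff_C_mul_X_pow, Finset.sum_ite_eq, Finset.mem_range,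
    coeff_borelTransform]
  split_ifs with h
  · rfl
  · rw [coeff_eq_zero_of_natDegree_lt, zero_div]
    rw [borosMoll_eq_taylor_shiftedBorosMoll, natDegree_taylor]
    exact (natDegree_shiftedBorosMoll_le n).trans_lt (by omega)

theorem Q_recurrence_mul (n : ℕ) :
    C (4 * (n + 2 : ℝ) ^ 2) * Q (n + 2) =
      C (4 * (2 * (n + 1 : ℝ) + 1)) * (X * Q (n + 1)) +
        C (16 * (n + 1 : ℝ) ^ 2 + 16 * (n + 1) + 6) * Q (n + 1) +
        C 4 * (X * derivative (Q (n + 1))) -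
        C (16 * (n + 1 : ℝ) ^ 2 - 1) * Q n := by
  have h := congrArg borelTransform (borosMoll_recurrence n)
  simp only [LinearMap.map_add, LinearMap.map_sub, borelTransform_C_mul,
    borelTransform_X_mul_derivative_X_mul] at h
  simpa only [borelTransform_X_mul_derivative, ← Q_eq_borelTransform] using h

/-- For every integer `n ≥ 1`, the polynomials `Q_n` satisfy the recurrence
`Q_{n+1}(x) = ((2n+1)x/(n+1)² + (8n²+8n+3)/(2(n+1)²))·Q_n(x)
 − ((4n−1)(4n+1)/(4(n+1)²))·Q_{n−1}(x) + (x/(n+1)²)·Q_n'(x)`. -/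
theorem Q_recurrence (n : ℕ) (hn : 1 ≤ n) :
    Q (n + 1) =
      (Polynomial.C ((2 * (n : ℝ) + 1) / ((n : ℝ) + 1) ^ 2) * Polynomial.X +
          Polynomial.C ((8 * (n : ℝ) ^ 2 + 8 * (n : ℝ) + 3) / (2 * ((n : ℝ) + 1) ^ 2))) * Q n -
        Polynomial.C ((4 * (n : ℝ) - 1) * (4 * (n : ℝ) + 1) / (4 * ((n : ℝ) + 1) ^ 2)) *
          Q (n - 1) +
        Polynomial.C (1 / ((n : ℝ) + 1) ^ 2) * Polynomial.X *
          Polynomial.derivative (Q n) := by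
  obtain ⟨n, rfl⟩ := Nat.exists_eq_add_of_le' hn
  ext i
  have hi := congrArg (coeff · i) (Q_recurrence_mul n)
  simp only [Nat.add_sub_cancel, Nat.add_assoc, Nat.reduceAdd, coeff_add, coeff_sub, coeff_C_mul,
    add_mul, mul_assoc] at hi ⊢
  push_cast
  field_simp
  linear_combination 2 * hi
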